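/- Let G be a connected interval graph without an apex, let M be a possible end of G, and let 𝒞 be a maximal set of pairwise ≺_M-incomparable max cliques of G (no two distinct members of 𝒞 are related by ≺_M, and 𝒞 is inclusion-maximal with this property). Then: (1) B ∩ C = B ∩ C' for all C,C' ∈ 𝒞 and all B ∈ M_G∖𝒞; (2) S_𝒞 := ⋃_{C ∈ 𝒞} C ∖ ⋃_{B ∈ M_G∖𝒞} B is a module of G; and (3) S_𝒞 = {v ∈ ⋃𝒞 : span(v) ≤ |𝒞|}. -/

import Mathlib

/-- `lo, hi` is an interval representation of the (finite simple) graph `G`: each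
vertex `v` is assigned the closed interval `[lo v, hi v] ⊆ ℕ`, and distinct vertices
are adjacent iff their intervals intersect. -/
def IsIntervalRep {V : Type} (G : SimpleGraph V) (lo hi : V → ℕ) : Prop :=
  (∀ v : V, lo v ≤ hi v) ∧
  ∀ u v : V, u ≠ v →
    (G.Adj u v ↔ (Set.Icc (lo u) (hi u) ∩ Set.Icc (lo v) (hi v)).Nonempty)

/-- A graph is an interval graph if it has an interval representation. -/
def IsIntervalGraph {V : Type} (G : SimpleGraph V) : Prop :=
  ∃ lo hi : V → ℕ, IsIntervalRep G lo hi

/-- A max clique: an inclusion-maximal clique. -/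
def IsMaxClique {V : Type} (G : SimpleGraph V) (s : Set V) : Prop :=
  G.IsClique s ∧ ∀ t : Set V, G.IsClique t → s ⊆ t → t = s

/-- An apex of a graph: a vertex adjacent to all other vertices. -/
def HasApex {V : Type} (G : SimpleGraph V) : Prop :=
  ∃ v : V, ∀ u : V, u ≠ v → G.Adj v u

/-- `≺_M`: the smallest binary relation on the max cliques of `G` such that
(i) `M ≺_M C` for every max clique `C ≠ M`;
(ii) `C ≺_M D` whenever `C` is a max clique and there is `E` with `E ≺_M D` and
`(E ∩ C) ∖ D ≠ ∅`; and
(iii) `C ≺_M D` whenever `D` is a max clique and there is `E` with `C ≺_M E` and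
`(E ∩ D) ∖ C ≠ ∅`. -/
inductive PrecM {V : Type} (G : SimpleGraph V) (M : Set V) : Set V → Set V → Prop
  | init (C : Set V) : IsMaxClique G C → C ≠ M → PrecM G M M C
  | ext_left (C D E : Set V) : IsMaxClique G C → PrecM G M E D →
      ((E ∩ C) \ D).Nonempty → PrecM G M C D
  | ext_right (C D E : Set V) : IsMaxClique G D → PrecM G M C E →
      ((E ∩ D) \ C).Nonempty → PrecM G M C D

/-- A minimal interval representation: one for which the number of points of
`⋃_v I_v ⊆ ℕ` is minimum among all interval representations of `G`. -/
def IsMinimalRep {V : Type} (G : SimpleGraph V) (lo hi : V → ℕ) : Prop :=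
  IsIntervalRep G lo hi ∧
  ∀ lo' hi' : V → ℕ, IsIntervalRep G lo' hi' →
    (⋃ v : V, Set.Icc (lo v) (hi v)).ncard ≤ (⋃ v : V, Set.Icc (lo' v) (hi' v)).ncard

/-- `M` is a possible end of `G`: there is a minimal interval representation of `G`
under whose induced order on max cliques `M` is least, i.e. `M` is the max clique
consisting of the intervals containing the leftmost point `k` of the representation. -/
def PossibleEnd {V : Type} (G : SimpleGraph V) (M : Set V) : Prop :=
  ∃ lo hi : V → ℕ, IsMinimalRep G lo hi ∧
    ∃ k : ℕ, (∀ v : V, k ≤ lo v) ∧ M = {v : V | k ∈ Set.Icc (lo v) (hi v)}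

/-- A module of `G`: a set `W` of vertices such that every vertex outside `W` is
adjacent either to all vertices of `W` or to none of them. -/
def IsModule {V : Type} (G : SimpleGraph V) (W : Set V) : Prop :=
  ∀ v : V, v ∉ W → (∀ w ∈ W, G.Adj v w) ∨ (∀ w ∈ W, ¬ G.Adj v w)

/-- `span(v)`: the number of max cliques of `G` containing `v`. -/
noncomputable def span {V : Type} (G : SimpleGraph V) (v : V) : ℕ :=
  {C : Set V | IsMaxClique G C ∧ v ∈ C}.ncard

/-!
If `A ≺_M C`, every other max clique is comparable with `A` or with `C`. Consequently a max
clique `B` outside a maximal antichain `𝒞` is comparable with every member of `𝒞`, and a vertex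
of `B ∩ C` missing from `C' ∈ 𝒞` would make `C` and `C'` comparable; this is (1). By (1), a
vertex of `⋃𝒞` that also lies in a max clique outside `𝒞` lies in every member of `𝒞`, which
gives both (2) and (3).
-/

open Relation

variable {V : Type} {G : SimpleGraph V} {M : Set V} {𝒞 : Set (Set V)}

theorem exists_isMaxClique_superset [Finite V] {s : Set V} (hs : G.IsClique s) :
    ∃ t, IsMaxClique G t ∧ s ⊆ t := by
  obtain ⟨t, hst, ht⟩ := Finite.exists_le_maximal (p := G.IsClique) hs
  exact ⟨t, ⟨ht.prop, fun u hu htu => (ht.eq_of_subset hu htu).symm⟩, hst⟩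

/-- The witness `x` of the last step deriving `A ≺_M C` either lies in `B`, which relates `B`
directly, or not, and then the comparability of `B` with the earlier clique `E` transfers. -/
theorem PrecM.symmGen_left_or_right {A C : Set V} (h : PrecM G M A C) {B : Set V}
    (hB : IsMaxClique G B) (hBA : B ≠ A) (hBC : B ≠ C) :
    SymmGen (PrecM G M) B A ∨ SymmGen (PrecM G M) B C := by
  induction h generalizing B with
  | init C _ _ => exact .inl (.of_rel_symm (.init B hB hBA))
  | ext_left C D E hC hED hx ih =>
    obtain ⟨x, ⟨hxE, hxC⟩, hxD⟩ := hx
    by_cases hxB : x ∈ B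
    · exact .inr (.of_rel (.ext_left B D E hB hED ⟨x, ⟨hxE, hxB⟩, hxD⟩))
    have hBE : B ≠ E := fun h => hxB (h ▸ hxE)
    rcases ih hB hBE hBC with (hBE' | hEB) | hBD
    · exact .inl (.of_rel (.ext_right B C E hC hBE' ⟨x, ⟨hxE, hxC⟩, hxB⟩))
    · exact .inl (.of_rel_symm (.ext_left C B E hC hEB ⟨x, ⟨hxE, hxC⟩, hxB⟩))
    · exact .inr hBD
  | ext_right C D E hD hCE hx ih =>
    obtain ⟨x, ⟨hxE, hxD⟩, hxC⟩ := hx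
    by_cases hxB : x ∈ B
    · exact .inl (.of_rel_symm (.ext_right C B E hB hCE ⟨x, ⟨hxE, hxB⟩, hxC⟩))
    have hBE : B ≠ E := fun h => hxB (h ▸ hxE)
    rcases ih hB hBA hBE with hBC | (hBE' | hEB)
    · exact .inl hBC
    · exact .inr (.of_rel (.ext_right B D E hD hBE' ⟨x, ⟨hxE, hxD⟩, hxB⟩))
    · exact .inr (.of_rel_symm (.ext_left D B E hD hEB ⟨x, ⟨hxE, hxD⟩, hxB⟩))

theorem symmGen_precM_left_or_right {A C B : Set V} (h : SymmGen (PrecM G M) A C)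
    (hB : IsMaxClique G B) (hBA : B ≠ A) (hBC : B ≠ C) :
    SymmGen (PrecM G M) B A ∨ SymmGen (PrecM G M) B C := by
  rcases h with h | h
  · exact h.symmGen_left_or_right hB hBA hBC
  · exact (h.symmGen_left_or_right hB hBC hBA).symm

def IsPrecAntichain (G : SimpleGraph V) (M : Set V) (𝒞 : Set (Set V)) : Prop :=
  (∀ C ∈ 𝒞, IsMaxClique G C) ∧ IsAntichain (PrecM G M) 𝒞

theorem symmGen_precM_of_maximal (h𝒞 : Maximal (IsPrecAntichain G M) 𝒞)
    {B : Set V} (hB : IsMaxClique G B) (hB𝒞 : B ∉ 𝒞) {C : Set V} (hC : C ∈ 𝒞) :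
    SymmGen (PrecM G M) B C := by
  obtain ⟨hmax, hanti⟩ := h𝒞.prop
  by_contra hBC
  have hincomp : ∀ D ∈ 𝒞, ¬ SymmGen (PrecM G M) B D := by
    intro D hD hBD
    have hDC : D ≠ C := by rintro rfl; exact hBC hBD
    have hCB : C ≠ B := by rintro rfl; exact hB𝒞 hC
    rcases symmGen_precM_left_or_right hBD (hmax C hC) hCB hDC.symm with hCB' | hCD
    · exact hBC hCB'.symm
    · exact hCD.elim (hanti hC hD hDC.symm) (hanti hD hC hDC)
  have hins : IsPrecAntichain G M (insert B 𝒞) := by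
    refine ⟨Set.forall_mem_insert.2 ⟨hB, hmax⟩, hanti.insert ?_ ?_⟩
    · exact fun D hD _ hDB => hincomp D hD (.of_rel_symm hDB)
    · exact fun D hD _ hBD => hincomp D hD (.of_rel hBD)
  exact hB𝒞 (h𝒞.eq_of_subset hins (Set.subset_insert B 𝒞) ▸ Set.mem_insert B 𝒞)

/-- A vertex of `B ∩ C` outside `C'` would carry the comparability of `B` and `C'` over to `C`. -/
theorem inter_subset_of_maximal (h𝒞 : Maximal (IsPrecAntichain G M) 𝒞)
    {B : Set V} (hB : IsMaxClique G B) (hB𝒞 : B ∉ 𝒞) {C C' : Set V} (hC : C ∈ 𝒞)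
    (hC' : C' ∈ 𝒞) : B ∩ C ⊆ C' := by
  intro x hx
  by_contra hxC'
  have hCC' : C ≠ C' := by rintro rfl; exact hxC' hx.2
  have hanti := h𝒞.prop.2
  rcases symmGen_precM_of_maximal h𝒞 hB hB𝒞 hC' with hBC' | hC'B
  · exact hanti hC hC' hCC' (.ext_left C C' B (h𝒞.prop.1 C hC) hBC' ⟨x, hx, hxC'⟩)
  · exact hanti hC' hC hCC'.symm (.ext_right C' C B (h𝒞.prop.1 C hC) hC'B ⟨x, hx, hxC'⟩)

def exclusiveVertices (G : SimpleGraph V) (𝒞 : Set (Set V)) : Set V :=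
  ⋃₀ 𝒞 \ ⋃₀ {B : Set V | IsMaxClique G B ∧ B ∉ 𝒞}

theorem mem_of_mem_sUnion_of_notMem_exclusiveVertices
    (hinter : ∀ B, IsMaxClique G B → B ∉ 𝒞 → ∀ C ∈ 𝒞, ∀ C' ∈ 𝒞, B ∩ C ⊆ C')
    {v : V} (hv : v ∈ ⋃₀ 𝒞) (hvS : v ∉ exclusiveVertices G 𝒞) {C' : Set V} (hC' : C' ∈ 𝒞) :
    v ∈ C' := by
  obtain ⟨C, hC, hvC⟩ := hv
  obtain ⟨B, ⟨hB, hB𝒞⟩, hvB⟩ : v ∈ ⋃₀ {B : Set V | IsMaxClique G B ∧ B ∉ 𝒞} := by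
    by_contra h
    exact hvS ⟨⟨C, hC, hvC⟩, h⟩
  exact hinter B hB hB𝒞 C hC C' hC' ⟨hvB, hvC⟩

theorem isModule_exclusiveVertices [Finite V] (h𝒞 : ∀ C ∈ 𝒞, IsMaxClique G C)
    (hinter : ∀ B, IsMaxClique G B → B ∉ 𝒞 → ∀ C ∈ 𝒞, ∀ C' ∈ 𝒞, B ∩ C ⊆ C') :
    IsModule G (exclusiveVertices G 𝒞) := by
  intro v hvS
  by_cases hadj : ∃ w ∈ exclusiveVertices G 𝒞, G.Adj v w
  · obtain ⟨w, hwS, hvw⟩ := hadj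
    obtain ⟨D, hD, hvwD⟩ :=
      exists_isMaxClique_superset (G.isClique_pair.2 fun _ => hvw)
    have hD𝒞 : D ∈ 𝒞 := by
      by_contra hD𝒞
      exact hwS.2 ⟨D, ⟨hD, hD𝒞⟩, hvwD (Set.mem_insert_of_mem v rfl)⟩
    have hv : v ∈ ⋃₀ 𝒞 := ⟨D, hD𝒞, hvwD (Set.mem_insert v _)⟩
    refine .inl fun w' hw'S => ?_
    obtain ⟨C', hC', hw'C'⟩ := hw'S.1
    have hvC' := mem_of_mem_sUnion_of_notMem_exclusiveVertices hinter hv hvS hC'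
    exact (h𝒞 C' hC').1 hvC' hw'C' (by rintro rfl; exact hvS hw'S)
  · exact .inr fun w hwS hvw => hadj ⟨w, hwS, hvw⟩

theorem exclusiveVertices_eq_setOf_span_le [Finite V] (h𝒞 : ∀ C ∈ 𝒞, IsMaxClique G C)
    (hinter : ∀ B, IsMaxClique G B → B ∉ 𝒞 → ∀ C ∈ 𝒞, ∀ C' ∈ 𝒞, B ∩ C ⊆ C') :
    exclusiveVertices G 𝒞 = {v ∈ ⋃₀ 𝒞 | span G v ≤ 𝒞.ncard} := by
  ext v
  refine ⟨fun hvS => ⟨hvS.1, Set.ncard_le_ncard ?_ (Set.toFinite 𝒞)⟩, fun ⟨hv, hspan⟩ => ?_⟩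
  · exact fun D ⟨hD, hvD⟩ => by_contra fun hD𝒞 => hvS.2 ⟨D, ⟨hD, hD𝒞⟩, hvD⟩
  by_contra hvS
  obtain ⟨B, ⟨hB, hB𝒞⟩, hvB⟩ : v ∈ ⋃₀ {B : Set V | IsMaxClique G B ∧ B ∉ 𝒞} := by
    by_contra h
    exact hvS ⟨hv, h⟩
  have hsub : insert B 𝒞 ⊆ {D : Set V | IsMaxClique G D ∧ v ∈ D} :=
    Set.insert_subset ⟨hB, hvB⟩ fun C hC =>
      ⟨h𝒞 C hC, mem_of_mem_sUnion_of_notMem_exclusiveVertices hinter hv hvS hC⟩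
  have hcard := Set.ncard_le_ncard hsub (Set.toFinite _)
  rw [Set.ncard_insert_of_notMem hB𝒞 (Set.toFinite 𝒞)] at hcard
  exact Nat.not_succ_le_self _ (hcard.trans hspan)

theorem incomparability_class_module_general {V : Type} [Fintype V] (G : SimpleGraph V)
    (M : Set V) (𝒞 : Set (Set V)) (h𝒞 : ∀ C ∈ 𝒞, IsMaxClique G C)
    (hpair : ∀ C ∈ 𝒞, ∀ D ∈ 𝒞, C ≠ D → ¬ PrecM G M C D)
    (hmax : ∀ 𝒟 : Set (Set V), (∀ C ∈ 𝒟, IsMaxClique G C) →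
      (∀ C ∈ 𝒟, ∀ D ∈ 𝒟, C ≠ D → ¬ PrecM G M C D) → 𝒞 ⊆ 𝒟 → 𝒟 = 𝒞) :
    (∀ C ∈ 𝒞, ∀ C' ∈ 𝒞, ∀ B : Set V, IsMaxClique G B → B ∉ 𝒞 →
      B ∩ C = B ∩ C') ∧
    IsModule G (⋃₀ 𝒞 \ ⋃₀ {B : Set V | IsMaxClique G B ∧ B ∉ 𝒞}) ∧
    ⋃₀ 𝒞 \ ⋃₀ {B : Set V | IsMaxClique G B ∧ B ∉ 𝒞}
      = {v ∈ ⋃₀ 𝒞 | span G v ≤ 𝒞.ncard} := by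
  have h𝒞max : Maximal (IsPrecAntichain G M) 𝒞 :=
    ⟨⟨h𝒞, hpair⟩, fun 𝒟 h𝒟 h𝒞𝒟 => (hmax 𝒟 h𝒟.1 h𝒟.2 h𝒞𝒟).le⟩
  have hinter : ∀ B, IsMaxClique G B → B ∉ 𝒞 → ∀ C ∈ 𝒞, ∀ C' ∈ 𝒞, B ∩ C ⊆ C' :=
    fun B hB hB𝒞 C hC C' hC' => inter_subset_of_maximal h𝒞max hB hB𝒞 hC hC'
  refine ⟨fun C hC C' hC' B hB hB𝒞 => ?_, isModule_exclusiveVertices h𝒞 hinter,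
    exclusiveVertices_eq_setOf_span_le h𝒞 hinter⟩
  exact (Set.subset_inter Set.inter_subset_left (hinter B hB hB𝒞 C hC C' hC')).antisymm
    (Set.subset_inter Set.inter_subset_left (hinter B hB hB𝒞 C' hC' C hC))

/-- Let `G` be a connected interval graph without an apex, `M` a
possible end of `G`, and `𝒞` a maximal set of pairwise `≺_M`-incomparable max cliques.
Then (1) `B ∩ C = B ∩ C'` for all `C, C' ∈ 𝒞` and every max clique `B ∉ 𝒞`;
(2) `S_𝒞 := ⋃𝒞 ∖ ⋃(M_G ∖ 𝒞)` is a module of `G`; and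
(3) `S_𝒞 = {v ∈ ⋃𝒞 : span(v) ≤ |𝒞|}`. -/
theorem incomparability_class_module {V : Type} [Fintype V] (G : SimpleGraph V)
    (hG : IsIntervalGraph G) (hconn : G.Connected) (hapex : ¬ HasApex G)
    (M : Set V) (hM : IsMaxClique G M) (hend : PossibleEnd G M)
    (𝒞 : Set (Set V)) (h𝒞 : ∀ C ∈ 𝒞, IsMaxClique G C)
    (hpair : ∀ C ∈ 𝒞, ∀ D ∈ 𝒞, C ≠ D → ¬ PrecM G M C D)
    (hmax : ∀ 𝒟 : Set (Set V), (∀ C ∈ 𝒟, IsMaxClique G C) →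
      (∀ C ∈ 𝒟, ∀ D ∈ 𝒟, C ≠ D → ¬ PrecM G M C D) → 𝒞 ⊆ 𝒟 → 𝒟 = 𝒞) :
    (∀ C ∈ 𝒞, ∀ C' ∈ 𝒞, ∀ B : Set V, IsMaxClique G B → B ∉ 𝒞 →
      B ∩ C = B ∩ C') ∧
    IsModule G (⋃₀ 𝒞 \ ⋃₀ {B : Set V | IsMaxClique G B ∧ B ∉ 𝒞}) ∧
    ⋃₀ 𝒞 \ ⋃₀ {B : Set V | IsMaxClique G B ∧ B ∉ 𝒞}
      = {v ∈ ⋃₀ 𝒞 | span G v ≤ 𝒞.ncard} :=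
  incomparability_class_module_general G M 𝒞 h𝒞 hpair hmax
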